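/- arXiv:2205.02037 — 8 statements merged into one kernel-verified Lean document; each statement's English description precedes it below -/
import Mathlib

section
/- Let J ⊆ ℝ be an interval, f : J → ℝ differentiable, I ⊆ ℝ an interval, and m > 0 a constant with |f'(y)| ≥ m for all y ∈ J. Then the Lebesgue measure of the set {x ∈ J : f(x) ∈ I} is at most |I| / m, where |I| is the length of I. -/
open MeasureTheory

/-- Auxiliary version: the case where `f' ≥ m` on `J`. -/
theorem statement1_aux (J I : Set ℝ) (hJ : J.OrdConnected) (hI : I.OrdConnected)
    (f f' : ℝ → ℝ) (m : ℝ) (hm : 0 < m)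
    (hder : ∀ y ∈ J, HasDerivWithinAt f (f' y) J y)
    (hlow : ∀ y ∈ J, m ≤ f' y) :
    volume {x ∈ J | f x ∈ I} ≤ volume I / ENNReal.ofReal m := by
  set S : Set ℝ := {x ∈ J | f x ∈ I} with hS_def
  have hconv : Convex ℝ J := hJ.convex
  have hcont : ContinuousOn f J := fun x hx => (hder x hx).continuousWithinAt
  have hmono : StrictMonoOn f J := by
    apply strictMonoOn_of_hasDerivWithinAt_pos hconv hcont
    · intro x hx
      exact (hder x (interior_subset hx)).mono interior_subset
    · intro x hx
      exact lt_of_lt_of_le hm (hlow x (interior_subset hx))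
  have hSsubJ : S ⊆ J := fun x hx => hx.1
  have hSord : S.OrdConnected := by
    constructor
    intro x hx y hy z hz
    have hzJ : z ∈ J := hJ.out hx.1 hy.1 hz
    refine ⟨hzJ, hI.out hx.2 hy.2 ⟨?_, ?_⟩⟩
    · exact hmono.monotoneOn hx.1 hzJ hz.1
    · exact hmono.monotoneOn hzJ hy.1 hz.2
  have hSmeas : MeasurableSet S := hSord.measurableSet
  have hinj : Set.InjOn f S := (hmono.injOn).mono hSsubJ
  have hderS : ∀ x ∈ S, HasDerivWithinAt f (f' x) S x :=
    fun x hx => (hder x hx.1).mono hSsubJ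
  have key : (∫⁻ x in S, ENNReal.ofReal |f' x|) ≤ volume (f '' S) := by
    simpa only [ContinuousLinearMap.det_toSpanSingleton] using
      lintegral_abs_det_fderiv_le_addHaar_image volume hSmeas
        (fun x hx => (hderS x hx).hasFDerivWithinAt) hinj
  have himg : volume (f '' S) ≤ volume I := by
    apply measure_mono
    rintro _ ⟨x, hx, rfl⟩
    exact hx.2
  have hlower : ENNReal.ofReal m * volume S ≤ ∫⁻ x in S, ENNReal.ofReal |f' x| := by
    have : (∫⁻ _ in S, ENNReal.ofReal m) ≤ ∫⁻ x in S, ENNReal.ofReal |f' x| := by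
      apply setLIntegral_mono' hSmeas
      intro x hx
      apply ENNReal.ofReal_le_ofReal
      exact le_trans (hlow x hx.1) (le_abs_self _)
    simpa [setLIntegral_const, mul_comm] using this
  rw [ENNReal.le_div_iff_mul_le (Or.inl (by simp [hm, ENNReal.ofReal_pos.2 hm] : ENNReal.ofReal m ≠ 0))
      (Or.inl ENNReal.ofReal_ne_top)]
  calc volume S * ENNReal.ofReal m = ENNReal.ofReal m * volume S := mul_comm _ _
    _ ≤ ∫⁻ x in S, ENNReal.ofReal |f' x| := hlower
    _ ≤ volume (f '' S) := key
    _ ≤ volume I := himg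

/-- if `f` is differentiable on an interval `J` with `|f'| ≥ m > 0` there,
then the measure of `{x ∈ J : f x ∈ I}` is at most `|I| / m` for any interval `I`. -/
theorem statement1 (J I : Set ℝ) (hJ : J.OrdConnected) (hI : I.OrdConnected)
    (f f' : ℝ → ℝ) (m : ℝ) (hm : 0 < m)
    (hder : ∀ y ∈ J, HasDerivWithinAt f (f' y) J y)
    (hlow : ∀ y ∈ J, m ≤ |f' y|) :
    volume {x ∈ J | f x ∈ I} ≤ volume I / ENNReal.ofReal m := by
  have hne : ∀ y ∈ J, f' y ≠ 0 := by
    intro y hy h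
    have := hlow y hy
    rw [h, abs_zero] at this
    linarith
  rcases hasDerivWithinAt_forall_lt_or_forall_gt_of_forall_ne hJ.convex hder hne with hneg | hpos
  · -- f' < 0 on J: apply aux to -f, -f', -I
    have hIneg : (-I).OrdConnected := by
      constructor
      intro x hx y hy z hz
      have : -z ∈ I := hI.out hy hx ⟨neg_le_neg hz.2, neg_le_neg hz.1⟩
      exact this
    have h := statement1_aux J (-I) hJ hIneg (fun x => -f x) (fun x => -f' x) m hm
      (fun y hy => (hder y hy).neg)
      (fun y hy => by
        have h1 := hlow y hy
        rw [abs_of_neg (hneg y hy)] at h1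
        show m ≤ -f' y
        exact h1)
    have hset : {x ∈ J | f x ∈ I} = {x ∈ J | -f x ∈ -I} := by
      ext x
      simp [Set.mem_neg]
    have hvol : volume (-I) = volume I := Measure.measure_neg volume I
    rw [hset]
    calc volume {x ∈ J | -f x ∈ -I} ≤ volume (-I) / ENNReal.ofReal m := h
      _ = volume I / ENNReal.ofReal m := by rw [hvol]
  · exact statement1_aux J I hJ hI f f' m hm hder
      (fun y hy => by have := hlow y hy; rwa [abs_of_pos (hpos y hy)] at this)
end

section
/- Let α > 2. There exist constants c, C > 0 and N₀ ≥ 1 depending only on α such that the following holds. For N ≥ N₀ and 0 < γ ≤ 1/2, define D̃₁ = [γ/2, γ] × [-√(1+α) γ², √(1+α) γ²] and D̃₂ = [N, N+γ] × [√(1+α) N^{(α+2)/2}, √(1+α) N^{(α+2)/2} + γ²], and set Dᵢ = D̃ᵢ ∪ (-D̃ᵢ). Then for all (ξ₁,η₁) ∈ D₁ and (ξ₂,η₂) ∈ D₂ one has c N^α γ ≤ | |ξ₁+ξ₂|^α(ξ₁+ξ₂) - |ξ₁|^α ξ₁ - |ξ₂|^α ξ₂ | ≤ C N^α γ. -/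
open scoped Pointwise

/-- Dispersive part of the resonance function:
`Ω¹_α(ξ₁,ξ₂) = |ξ₁+ξ₂|^α(ξ₁+ξ₂) - |ξ₁|^α ξ₁ - |ξ₂|^α ξ₂`. -/
noncomputable def Omega1 (α ξ₁ ξ₂ : ℝ) : ℝ :=
  |ξ₁ + ξ₂| ^ α * (ξ₁ + ξ₂) - |ξ₁| ^ α * ξ₁ - |ξ₂| ^ α * ξ₂

/-- `D̃₁ = [γ/2, γ] × [-√(1+α) γ², √(1+α) γ²]`. -/
noncomputable def Dtilde1 (α γ : ℝ) : Set (ℝ × ℝ) :=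
  Set.Icc (γ / 2) γ ×ˢ
    Set.Icc (-(Real.sqrt (1 + α) * γ ^ 2)) (Real.sqrt (1 + α) * γ ^ 2)

/-- `D̃₂ = [N, N+γ] × [√(1+α) N^{(α+2)/2}, √(1+α) N^{(α+2)/2} + γ²]`. -/
noncomputable def Dtilde2 (α N γ : ℝ) : Set (ℝ × ℝ) :=
  Set.Icc N (N + γ) ×ˢ
    Set.Icc (Real.sqrt (1 + α) * N ^ ((α + 2) / 2))
      (Real.sqrt (1 + α) * N ^ ((α + 2) / 2) + γ ^ 2)

/-!
Write `f(ξ) = |ξ|^α ξ`, an odd function with `f'(ξ) = (α+1)|ξ|^α`, so that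
`Ω¹_α(ξ₁,ξ₂) = f(ξ₁+ξ₂) - f(ξ₁) - f(ξ₂)` is odd in `(ξ₁,ξ₂)`.
After this symmetry, and whatever the sign of `ξ₂`, `Ω¹_α` takes the form
`(x+h)^(α+1) - x^(α+1) - h^(α+1)` with `h = |ξ₁| ∈ [γ/2, γ]` and `x ∈ [N/2, 2N]`,
`x ≥ h`. The mean value theorem squeezes this between `α x^α h` and `(α+1)(x+h)^α h`,
both of which are comparable to `N^α γ`.
-/

open Set

lemma rpow_add_one_sub_rpow_add_one_bounds {α x h : ℝ} (hα : 0 ≤ α) (hx : 0 < x)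
    (hh : 0 ≤ h) :
    (α + 1) * x ^ α * h ≤ (x + h) ^ (α + 1) - x ^ (α + 1) ∧
      (x + h) ^ (α + 1) - x ^ (α + 1) ≤ (α + 1) * (x + h) ^ α * h := by
  have hxh : x ≤ x + h := le_add_of_nonneg_right hh
  have hcont : ContinuousOn (fun t : ℝ => t ^ (α + 1)) (Icc x (x + h)) :=
    (Real.continuous_rpow_const (by linarith)).continuousOn
  have hdiff : DifferentiableOn ℝ (fun t : ℝ => t ^ (α + 1)) (interior (Icc x (x + h))) :=
    (Real.differentiable_rpow_const (by linarith)).differentiableOn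
  have hderiv (t : ℝ) : deriv (fun t : ℝ => t ^ (α + 1)) t = (α + 1) * t ^ α := by
    rw [Real.deriv_rpow_const, add_sub_cancel_right]
  have hα1 : 0 ≤ α + 1 := by linarith
  constructor
  · have := (convex_Icc x (x + h)).mul_sub_le_image_sub_of_le_deriv hcont hdiff
      (C := (α + 1) * x ^ α) (fun t ht => by
        rw [interior_Icc] at ht
        rw [hderiv]
        gcongr
        exact ht.1.le)
      x (left_mem_Icc.2 hxh) (x + h) (right_mem_Icc.2 hxh) hxh
    simpa using this
  · have := (convex_Icc x (x + h)).image_sub_le_mul_sub_of_deriv_le hcont hdiff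
      (C := (α + 1) * (x + h) ^ α) (fun t ht => by
        rw [interior_Icc] at ht
        rw [hderiv]
        gcongr
        · exact (hx.trans ht.1).le
        · exact ht.2.le)
      x (left_mem_Icc.2 hxh) (x + h) (right_mem_Icc.2 hxh) hxh
    simpa using this

lemma add_rpow_add_one_sub_bounds {α x h : ℝ} (hα : 0 ≤ α) (hh : 0 < h) (hhx : h ≤ x) :
    α * x ^ α * h ≤ (x + h) ^ (α + 1) - x ^ (α + 1) - h ^ (α + 1) ∧
      (x + h) ^ (α + 1) - x ^ (α + 1) - h ^ (α + 1) ≤ (α + 1) * (x + h) ^ α * h := by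
  obtain ⟨hlow, hupp⟩ :=
    rpow_add_one_sub_rpow_add_one_bounds hα (hh.trans_le hhx) hh.le
  have hpow : h ^ (α + 1) ≤ x ^ α * h := by
    rw [Real.rpow_add_one hh.ne']
    gcongr
  have hpow_nonneg : 0 ≤ h ^ (α + 1) := by positivity
  constructor <;> nlinarith

lemma Omega1_neg_neg (α ξ₁ ξ₂ : ℝ) : Omega1 α (-ξ₁) (-ξ₂) = -Omega1 α ξ₁ ξ₂ := by
  simp only [Omega1, ← neg_add, abs_neg]
  ring

lemma Omega1_of_pos {α x h : ℝ} (hh : 0 < h) (hx : 0 < x) :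
    Omega1 α h x = (x + h) ^ (α + 1) - x ^ (α + 1) - h ^ (α + 1) := by
  have hxh : 0 < x + h := by linarith
  rw [Omega1, add_comm h x, abs_of_pos hxh, abs_of_pos hh, abs_of_pos hx,
    Real.rpow_add_one hxh.ne', Real.rpow_add_one hx.ne', Real.rpow_add_one hh.ne']
  ring

lemma Omega1_of_neg {α x h : ℝ} (hh : 0 < h) (hx : 0 < x) :
    Omega1 α h (-(x + h)) = (x + h) ^ (α + 1) - x ^ (α + 1) - h ^ (α + 1) := by
  have hxh : 0 < x + h := by linarith
  rw [Omega1, show h + -(x + h) = -x by ring, abs_neg, abs_neg, abs_of_pos hxh,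
    abs_of_pos hh, abs_of_pos hx, Real.rpow_add_one hxh.ne', Real.rpow_add_one hx.ne',
    Real.rpow_add_one hh.ne']
  ring

lemma abs_fst_mem_Icc_of_mem_union_neg {a b : ℝ} (ha : 0 ≤ a) {T : Set ℝ} {p : ℝ × ℝ}
    (hp : p ∈ Icc a b ×ˢ T ∪ -(Icc a b ×ˢ T)) : |p.1| ∈ Icc a b := by
  rcases hp with hp | hp
  · rw [abs_of_nonneg (ha.trans (mem_prod.1 hp).1.1)]
    exact (mem_prod.1 hp).1
  · have := (mem_prod.1 (mem_neg.1 hp)).1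
    rw [Prod.fst_neg] at this
    rwa [abs_of_nonpos (by linarith [this.1])]

lemma abs_Omega1_bounds {α N γ ξ₁ ξ₂ : ℝ} (hα : 0 < α) (hN : 1 ≤ N) (hγ : 0 < γ)
    (hγ2 : γ ≤ 1 / 2) (h₁ : |ξ₁| ∈ Icc (γ / 2) γ) (h₂ : |ξ₂| ∈ Icc N (N + γ)) :
    α / (2 ^ α * 2) * N ^ α * γ ≤ |Omega1 α ξ₁ ξ₂| ∧
      |Omega1 α ξ₁ ξ₂| ≤ (α + 1) * 2 ^ α * N ^ α * γ := by
  wlog hξ₁ : 0 < ξ₁ generalizing ξ₁ ξ₂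
  · have := this (ξ₁ := -ξ₁) (ξ₂ := -ξ₂) (by rwa [abs_neg]) (by rwa [abs_neg])
      (by linarith [abs_of_nonpos (not_lt.1 hξ₁), h₁.1])
    rwa [Omega1_neg_neg, abs_neg] at this
  rw [abs_of_pos hξ₁] at h₁
  obtain ⟨x, hxN, hx2N, hξ₁x, hΩ⟩ : ∃ x, N / 2 ≤ x ∧ x + ξ₁ ≤ 2 * N ∧ ξ₁ ≤ x ∧
      Omega1 α ξ₁ ξ₂ = (x + ξ₁) ^ (α + 1) - x ^ (α + 1) - ξ₁ ^ (α + 1) := by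
    rcases le_or_gt 0 ξ₂ with hξ₂ | hξ₂
    · rw [abs_of_nonneg hξ₂] at h₂
      exact ⟨ξ₂, by linarith [h₂.1], by linarith [h₂.2, h₁.2], by linarith [h₂.1, h₁.2],
        Omega1_of_pos hξ₁ (by linarith [h₂.1])⟩
    · rw [abs_of_neg hξ₂] at h₂
      refine ⟨-ξ₂ - ξ₁, by linarith [h₂.1, h₁.2], by linarith [h₂.2], by linarith [h₂.1, h₁.2],
        ?_⟩
      rw [← Omega1_of_neg hξ₁ (by linarith [h₂.1, h₁.2]), sub_add_cancel, neg_neg]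
  obtain ⟨hlow, hupp⟩ := add_rpow_add_one_sub_bounds hα.le hξ₁ hξ₁x
  have hx : 0 < x := hξ₁.trans_le hξ₁x
  have hΩpos : 0 < Omega1 α ξ₁ ξ₂ := by
    rw [hΩ]; exact lt_of_lt_of_le (by positivity) hlow
  rw [abs_of_pos hΩpos, hΩ]
  constructor
  · calc α / (2 ^ α * 2) * N ^ α * γ = α * (N / 2) ^ α * (γ / 2) := by
          rw [Real.div_rpow (by linarith) zero_le_two]; field_simp
      _ ≤ α * x ^ α * ξ₁ := by gcongr; linarith [h₁.1]
      _ ≤ _ := hlow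
  · calc _ ≤ (α + 1) * (x + ξ₁) ^ α * ξ₁ := hupp
      _ ≤ (α + 1) * (2 * N) ^ α * γ := by
          gcongr
          exact h₁.2
      _ = (α + 1) * 2 ^ α * N ^ α * γ := by
          rw [Real.mul_rpow zero_le_two (by linarith)]; ring

/-- size of the dispersive part `Ω¹_α` of the resonance function on
`D₁ × D₂` with `Dᵢ = D̃ᵢ ∪ (-D̃ᵢ)`: it is comparable to `N^α γ`. -/
theorem statement2 (α : ℝ) (hα : 2 < α) :
    ∃ c C N₀ : ℝ, 0 < c ∧ 0 < C ∧ 1 ≤ N₀ ∧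
      ∀ N γ : ℝ, N₀ ≤ N → 0 < γ → γ ≤ 1 / 2 →
        ∀ ξ₁ η₁ ξ₂ η₂ : ℝ,
          (ξ₁, η₁) ∈ Dtilde1 α γ ∪ -Dtilde1 α γ →
          (ξ₂, η₂) ∈ Dtilde2 α N γ ∪ -Dtilde2 α N γ →
          c * N ^ α * γ ≤ |Omega1 α ξ₁ ξ₂| ∧ |Omega1 α ξ₁ ξ₂| ≤ C * N ^ α * γ := by
  have hα0 : 0 < α := by linarith
  refine ⟨α / (2 ^ α * 2), (α + 1) * 2 ^ α, 1, by positivity, by positivity, le_rfl, ?_⟩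
  intro N γ hN hγ hγ2 ξ₁ η₁ ξ₂ η₂ hD₁ hD₂
  exact abs_Omega1_bounds hα0 hN hγ hγ2
    (abs_fst_mem_Icc_of_mem_union_neg (by positivity) hD₁)
    (abs_fst_mem_Icc_of_mem_union_neg (by linarith) hD₂)
end

section
/- Let α > 2 and θ > 0 be sufficiently small. There exist constants c, C > 0 and N₀ ≥ 1 (depending on α and θ) such that for all N ≥ N₀, with γ = N^{-(α-1)/2 - θ}, and with D̃₁ = [γ/2, γ] × [-√(1+α) γ², √(1+α) γ²] and D̃₂ = [N, N+γ] × [√(1+α) N^{(α+2)/2}, √(1+α) N^{(α+2)/2} + γ²], the resonance function satisfies c N^{α-1} γ² ≤ |Ω_α(ξ₁,ξ₂,η₁,η₂)| ≤ C N^{α-1} γ² for all (ξ₁,η₁) ∈ D̃₁ and (ξ₂,η₂) ∈ D̃₂. -/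
/-- Full resonance function of the fractional KP-I equation:
`Ω_α(ξ₁,ξ₂,η₁,η₂) = Ω¹_α(ξ₁,ξ₂) - (η₁ξ₂ - η₂ξ₁)²/(ξ₁ξ₂(ξ₁+ξ₂))`. -/
noncomputable def Omega (α ξ₁ ξ₂ η₁ η₂ : ℝ) : ℝ :=
  Omega1 α ξ₁ ξ₂ - (η₁ * ξ₂ - η₂ * ξ₁) ^ 2 / (ξ₁ * ξ₂ * (ξ₁ + ξ₂))

/-!
Split `Ω = L - E` with `L = (ξ₁+ξ₂)^(α+1) - ξ₂^(α+1) - η₂² ξ₁ / (ξ₂ (ξ₁+ξ₂))` (`OmegaLeading`).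
By the tangent-line inequality for `x ↦ x^(α+1)`, `L` is, up to the factor
`ξ₁ / (ξ₂ (ξ₁+ξ₂)) ≍ γ / N²`, the difference `(α+1) ξ₂^(α+1) (ξ₁+ξ₂) - η₂²`. On `D̃₂`,
`η₂² = (1+α) N^(α+2) + O(N^(α/2+1) γ)`, so this difference is `≍ N^(α+1) γ` and
`L ≍ N^(α-1) γ²`. The remainder `E`, made of `ξ₁^(α+1)` and the terms of the quotient that
involve `η₁`, is `O(N^(α/2) γ²)`, negligible against `N^(α-1) γ²` because `α > 2`.
-/

open Real Filter Set

lemma add_mul_sub_le_rpow_add_one {q x y : ℝ} (hq : 0 ≤ q) (hx : 0 < x) (hy : 0 ≤ y) :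
    x ^ (q + 1) + (q + 1) * x ^ q * (y - x) ≤ y ^ (q + 1) := by
  have hs : -1 ≤ (y - x) / x := by rw [le_div_iff₀ hx]; linarith
  have hB := one_add_mul_self_le_rpow_one_add hs (p := q + 1) (by linarith)
  rw [show 1 + (y - x) / x = y / x by field_simp; ring, div_rpow hy hx.le] at hB
  have hxq : 0 < x ^ (q + 1) := rpow_pos_of_pos hx _
  calc x ^ (q + 1) + (q + 1) * x ^ q * (y - x)
      = x ^ (q + 1) * (1 + (q + 1) * ((y - x) / x)) := by
        rw [rpow_add_one hx.ne']; field_simp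
    _ ≤ x ^ (q + 1) * (y ^ (q + 1) / x ^ (q + 1)) := by gcongr
    _ = y ^ (q + 1) := by field_simp

lemma Omega_eq_of_pos {α a b : ℝ} (η₁ η₂ : ℝ) (ha : 0 < a) (hb : 0 < b) :
    Omega α a b η₁ η₂ = (a + b) ^ (α + 1) - a ^ (α + 1) - b ^ (α + 1)
      - (η₁ * b - η₂ * a) ^ 2 / (a * b * (a + b)) := by
  have hab : 0 < a + b := add_pos ha hb
  simp only [Omega, Omega1, abs_of_pos hab, abs_of_pos ha, abs_of_pos hb,
    rpow_add_one hab.ne', rpow_add_one ha.ne', rpow_add_one hb.ne']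

noncomputable def OmegaLeading (α a b η₂ : ℝ) : ℝ :=
  (a + b) ^ (α + 1) - b ^ (α + 1) - η₂ ^ 2 * a / (b * (a + b))

lemma abs_Omega_sub_OmegaLeading_le {α a b η₁ η₂ : ℝ} (ha : 0 < a) (hb : 0 < b)
    (hη₂ : 0 ≤ η₂) :
    |Omega α a b η₁ η₂ - OmegaLeading α a b η₂|
      ≤ a ^ (α + 1) + 2 * |η₁| * η₂ / b + η₁ ^ 2 / a := by
  have hab : 0 < a + b := add_pos ha hb
  have hsplit : Omega α a b η₁ η₂ - OmegaLeading α a b η₂ =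
      -a ^ (α + 1) + 2 * η₁ * η₂ / (a + b) - η₁ ^ 2 * (b / (a + b)) / a := by
    rw [Omega_eq_of_pos η₁ η₂ ha hb, OmegaLeading]
    field_simp
    ring
  have hcross : |2 * η₁ * η₂ / (a + b)| ≤ 2 * |η₁| * η₂ / b := by
    rw [abs_div, abs_mul, abs_mul, abs_of_pos hab, abs_of_nonneg hη₂, abs_two]
    gcongr
    linarith
  have hquad : |η₁ ^ 2 * (b / (a + b)) / a| ≤ η₁ ^ 2 / a := by
    have hfrac : b / (a + b) ≤ 1 := (div_le_one hab).2 (by linarith)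
    rw [abs_of_nonneg (by positivity)]
    gcongr
    exact mul_le_of_le_one_right (sq_nonneg η₁) hfrac
  have hpow : 0 ≤ a ^ (α + 1) := rpow_nonneg ha.le _
  rw [hsplit, abs_le]
  constructor <;> linarith [abs_le.1 hcross, abs_le.1 hquad]

lemma le_OmegaLeading {α a b N η₂ : ℝ} (hα : 0 ≤ α) (ha : 0 < a) (hN : 0 < N) (hNb : N ≤ b)
    (hab : a + b ≤ 2 * N)
    (hη₂ : η₂ ^ 2 ≤ (α + 1) * N ^ (α + 2) + (α + 1) * N ^ (α + 1) * a / 2) :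
    (α + 1) / 8 * N ^ (α - 1) * a ^ 2 ≤ OmegaLeading α a b η₂ := by
  have hb : 0 < b := hN.trans_le hNb
  have htan := add_mul_sub_le_rpow_add_one hα hb (add_pos ha hb).le
  rw [add_sub_cancel_right] at htan
  have hNpow : 0 ≤ (α + 1) * N ^ (α + 1) * a / 2 := by positivity
  have hbracket :
      (α + 1) * N ^ (α + 1) * a / 2 ≤ (α + 1) * b ^ (α + 1) * (a + b) - η₂ ^ 2 := by
    have hbpow : N ^ (α + 1) ≤ b ^ (α + 1) := rpow_le_rpow hN.le hNb (by linarith)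
    have h := mul_le_mul_of_nonneg_left
      (mul_le_mul hbpow (by linarith : N + a ≤ a + b) (by positivity) (by positivity))
      (by linarith : 0 ≤ α + 1)
    have hN2 : N ^ (α + 2) = N ^ (α + 1) * N := by rw [← rpow_add_one hN.ne']; ring_nf
    rw [hN2] at hη₂
    linarith
  have hden : b * (a + b) ≤ 4 * N ^ 2 := by nlinarith
  have hN2 : N ^ (α + 1) = N ^ (α - 1) * N ^ 2 := by
    rw [← rpow_natCast, ← rpow_add hN]; norm_num; ring_nf
  calc (α + 1) / 8 * N ^ (α - 1) * a ^ 2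
      = a * ((α + 1) * N ^ (α + 1) * a / 2) / (4 * N ^ 2) := by rw [hN2]; field_simp; ring
    _ ≤ a * ((α + 1) * b ^ (α + 1) * (a + b) - η₂ ^ 2) / (b * (a + b)) :=
        div_le_div₀ (mul_nonneg ha.le (hNpow.trans hbracket))
          (mul_le_mul_of_nonneg_left hbracket ha.le) (by positivity) hden
    _ = (α + 1) * b ^ α * a - η₂ ^ 2 * a / (b * (a + b)) := by
        rw [rpow_add_one hb.ne']; field_simp
    _ ≤ OmegaLeading α a b η₂ := by rw [OmegaLeading]; linarith

lemma OmegaLeading_le {α a b N η₂ : ℝ} (hα : 0 ≤ α) (ha : 0 < a) (hN : 0 < N) (hNb : N ≤ b)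
    (hab : a + b ≤ 2 * N) (hbN : b ≤ N + 2 * a) (hη₂ : (α + 1) * N ^ (α + 2) ≤ η₂ ^ 2) :
    OmegaLeading α a b η₂ ≤ 3 * 2 ^ (α + 1) * (α + 1) * (α + 2) * N ^ (α - 1) * a ^ 2 := by
  have hb : 0 < b := hN.trans_le hNb
  have hab0 : 0 < a + b := add_pos ha hb
  have htan₁ := add_mul_sub_le_rpow_add_one hα hab0 hb.le
  have htan₂ := add_mul_sub_le_rpow_add_one (q := α + 1) (by linarith) hab0 hN.le
  rw [show α + 1 + 1 = α + 2 by ring] at htan₂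
  have hpow : (a + b) ^ (α + 1) ≤ 2 ^ (α + 1) * N ^ (α + 1) := by
    rw [← mul_rpow zero_le_two hN.le]; exact rpow_le_rpow hab0.le hab (by linarith)
  have hdiff : (a + b) ^ (α + 2) - N ^ (α + 2)
      ≤ (α + 2) * (2 ^ (α + 1) * N ^ (α + 1)) * (3 * a) := by
    have := mul_le_mul hpow (by linarith : a + b - N ≤ 3 * a) (by linarith) (by positivity)
    nlinarith
  have hbracket : (α + 1) * ((a + b) ^ (α + 1) * b) - η₂ ^ 2
      ≤ 3 * 2 ^ (α + 1) * (α + 1) * (α + 2) * N ^ (α + 1) * a := by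
    have : (a + b) ^ (α + 1) * b ≤ (a + b) ^ (α + 2) := by
      rw [show α + 2 = α + 1 + 1 by ring, rpow_add_one hab0.ne' (α + 1)]
      exact mul_le_mul_of_nonneg_left (by linarith) (rpow_nonneg hab0.le _)
    nlinarith
  have hden : N ^ 2 ≤ b * (a + b) := by nlinarith
  have hN2 : N ^ (α + 1) = N ^ (α - 1) * N ^ 2 := by
    rw [← rpow_natCast, ← rpow_add hN]; norm_num; ring_nf
  calc OmegaLeading α a b η₂
      ≤ (α + 1) * (a + b) ^ α * a - η₂ ^ 2 * a / (b * (a + b)) := by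
        rw [OmegaLeading]; linarith
    _ = a * ((α + 1) * ((a + b) ^ (α + 1) * b) - η₂ ^ 2) / (b * (a + b)) := by
        rw [rpow_add_one hab0.ne']; field_simp
    _ ≤ a * (3 * 2 ^ (α + 1) * (α + 1) * (α + 2) * N ^ (α + 1) * a) / N ^ 2 :=
        div_le_div₀ (by positivity) (mul_le_mul_of_nonneg_left hbracket ha.le) (by positivity)
          hden
    _ = 3 * 2 ^ (α + 1) * (α + 1) * (α + 2) * N ^ (α - 1) * a ^ 2 := by rw [hN2]; field_simp

lemma rpow_add_one_add_div_add_sq_div_le {α s N γ a b η₁ η₂ : ℝ} (hα : 1 ≤ α) (hs : 0 ≤ s)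
    (hN : 1 ≤ N) (hγ : 0 < γ) (hγ1 : γ ≤ 1) (ha : γ / 2 ≤ a) (ha' : a ≤ γ) (hb : N ≤ b)
    (hη₁ : |η₁| ≤ s * γ ^ 2) (hη₂ : 0 ≤ η₂) (hη₂' : η₂ ≤ (s + 1) * (N ^ (α / 2) * N)) :
    a ^ (α + 1) + 2 * |η₁| * η₂ / b + η₁ ^ 2 / a
      ≤ (1 + 4 * s * (s + 1)) * N ^ (α / 2) * γ ^ 2 := by
  have ha0 : 0 < a := by linarith
  have hM : 1 ≤ N ^ (α / 2) := one_le_rpow hN (by linarith)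
  have hγ2 : γ ^ 2 ≤ N ^ (α / 2) * γ ^ 2 := le_mul_of_one_le_left (by positivity) hM
  have hpow : a ^ (α + 1) ≤ γ ^ 2 := calc
    a ^ (α + 1) ≤ γ ^ (α + 1) := rpow_le_rpow ha0.le ha' (by linarith)
    _ ≤ γ ^ (2 : ℝ) := rpow_le_rpow_of_exponent_ge hγ hγ1 (by linarith)
    _ = γ ^ 2 := rpow_two γ
  have hcross : 2 * |η₁| * η₂ / b ≤ 2 * s * (s + 1) * N ^ (α / 2) * γ ^ 2 := by
    rw [div_le_iff₀ (by linarith)]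
    have := mul_le_mul hη₁ hη₂' hη₂ (by positivity)
    nlinarith [mul_le_mul_of_nonneg_left hb
      (by positivity : 0 ≤ 2 * s * (s + 1) * N ^ (α / 2) * γ ^ 2)]
  have hquad : η₁ ^ 2 / a ≤ 2 * s ^ 2 * N ^ (α / 2) * γ ^ 2 := by
    rw [div_le_iff₀ ha0]
    calc η₁ ^ 2 ≤ (s * γ ^ 2) ^ 2 := by rw [← sq_abs]; gcongr
      _ = s ^ 2 * γ ^ 2 * (γ * γ) := by ring
      _ ≤ s ^ 2 * γ ^ 2 * (N ^ (α / 2) * (2 * a)) := by gcongr <;> linarith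
      _ = 2 * s ^ 2 * N ^ (α / 2) * γ ^ 2 * a := by ring
  nlinarith

lemma sq_bounds_of_mem_Dtilde2 {α N γ ξ₂ η₂ : ℝ} (hα : 0 ≤ α) (hN : 1 ≤ N) (hγ : 0 < γ)
    (hγ1 : γ ≤ 1) (h : (ξ₂, η₂) ∈ Dtilde2 α N γ) :
    (α + 1) * N ^ (α + 2) ≤ η₂ ^ 2 ∧
      η₂ ^ 2 ≤ (α + 1) * N ^ (α + 2) + (2 * √(1 + α) + 1) * (N ^ (α / 2) * N) * γ ∧
      η₂ ≤ (√(1 + α) + 1) * (N ^ (α / 2) * N) := by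
  simp only [Dtilde2, mem_prod, mem_Icc] at h
  obtain ⟨-, hη₂, hη₂'⟩ := h
  have hN0 : 0 < N := by linarith
  have hK : N ^ ((α + 2) / 2) = N ^ (α / 2) * N := by rw [← rpow_add_one hN0.ne']; ring_nf
  have hsK : (√(1 + α) * (N ^ (α / 2) * N)) ^ 2 = (α + 1) * N ^ (α + 2) := by
    rw [mul_pow, sq_sqrt (by linarith), ← hK, ← rpow_natCast, ← rpow_mul hN0.le]; ring_nf
  rw [hK] at hη₂ hη₂'
  set s := √(1 + α)
  set K := N ^ (α / 2) * N
  have hK1 : 1 ≤ K := one_le_mul_of_one_le_of_one_le (one_le_rpow hN (by linarith)) hN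
  have hγ2 : γ ^ 2 ≤ γ := by nlinarith
  refine ⟨hsK ▸ pow_le_pow_left₀ (by positivity) hη₂ 2, ?_, by linarith⟩
  calc η₂ ^ 2 ≤ (s * K + γ ^ 2) ^ 2 := pow_le_pow_left₀ (le_trans (by positivity) hη₂) hη₂' 2
    _ = (s * K) ^ 2 + (2 * s * K + γ ^ 2) * γ ^ 2 := by ring
    _ ≤ (s * K) ^ 2 + ((2 * s + 1) * K) * γ := by gcongr; linarith
    _ = (α + 1) * N ^ (α + 2) + (2 * s + 1) * K * γ := by rw [hsK]

lemma Omega_bounds_of_mem {α N γ ξ₁ η₁ ξ₂ η₂ : ℝ} (hα : 1 ≤ α) (hN : 2 ≤ N)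
    (hN₁ : 4 * (2 * √(1 + α) + 1) ≤ (α + 1) * N ^ (α / 2))
    (hN₂ : 64 * (1 + 4 * √(1 + α) * (√(1 + α) + 1)) ≤ (α + 1) * N ^ ((α - 2) / 2))
    (hγ : 0 < γ) (hγ1 : γ ≤ 1) (h₁ : (ξ₁, η₁) ∈ Dtilde1 α γ) (h₂ : (ξ₂, η₂) ∈ Dtilde2 α N γ) :
    (α + 1) / 64 * N ^ (α - 1) * γ ^ 2 ≤ Omega α ξ₁ ξ₂ η₁ η₂ ∧
      Omega α ξ₁ ξ₂ η₁ η₂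
        ≤ (3 * 2 ^ (α + 1) * (α + 1) * (α + 2) + (α + 1) / 64) * N ^ (α - 1) * γ ^ 2 := by
  obtain ⟨hη₂low, hη₂sq, hη₂up⟩ :=
    sq_bounds_of_mem_Dtilde2 (by linarith) (by linarith) hγ hγ1 h₂
  simp only [Dtilde1, Dtilde2, mem_prod, mem_Icc] at h₁ h₂
  obtain ⟨⟨ha, ha'⟩, hη₁, hη₁'⟩ := h₁
  obtain ⟨⟨hb, hb'⟩, hη₂, -⟩ := h₂
  have hN0 : 0 < N := by linarith
  have hξ₁ : 0 < ξ₁ := by linarith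
  have hη₂0 : 0 ≤ η₂ := le_trans (by positivity) hη₂
  set s := √(1 + α)
  have hlow := le_OmegaLeading (α := α) (η₂ := η₂) (by linarith) hξ₁ hN0 hb (by linarith) (by
    have hsplit : N ^ (α + 1) = N ^ (α / 2) * (N ^ (α / 2) * N) := by
      rw [← rpow_add_one hN0.ne', ← rpow_add hN0]; ring_nf
    have := mul_le_mul_of_nonneg_right hN₁ (by positivity : 0 ≤ (N ^ (α / 2) * N) * γ)
    have hξγ : (α + 1) * N ^ (α + 1) * γ ≤ (α + 1) * N ^ (α + 1) * (2 * ξ₁) :=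
      mul_le_mul_of_nonneg_left (by linarith) (by positivity)
    rw [hsplit] at hξγ ⊢
    linarith)
  have hup := OmegaLeading_le (α := α) (η₂ := η₂) (by linarith) hξ₁ hN0 hb (by linarith)
    (by linarith) hη₂low
  have herr := (abs_Omega_sub_OmegaLeading_le (η₁ := η₁) hξ₁ (by linarith) hη₂0).trans
    (rpow_add_one_add_div_add_sq_div_le hα (sqrt_nonneg _) (by linarith) hγ hγ1 ha ha' hb
      (abs_le.2 ⟨hη₁, hη₁'⟩) hη₂0 hη₂up)
  have hsmall : (1 + 4 * s * (s + 1)) * N ^ (α / 2) * γ ^ 2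
      ≤ (α + 1) / 64 * N ^ (α - 1) * γ ^ 2 := by
    have hsplit : N ^ (α - 1) = N ^ ((α - 2) / 2) * N ^ (α / 2) := by
      rw [← rpow_add hN0]; ring_nf
    have := mul_le_mul_of_nonneg_right hN₂ (by positivity : 0 ≤ N ^ (α / 2) * γ ^ 2)
    rw [hsplit]
    linarith
  have hξ₁low : (α + 1) / 8 * N ^ (α - 1) * (γ / 2) ^ 2 ≤ (α + 1) / 8 * N ^ (α - 1) * ξ₁ ^ 2 :=
    mul_le_mul_of_nonneg_left (pow_le_pow_left₀ (by positivity) ha 2) (by positivity)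
  have hξ₁up : 3 * 2 ^ (α + 1) * (α + 1) * (α + 2) * N ^ (α - 1) * ξ₁ ^ 2
      ≤ 3 * 2 ^ (α + 1) * (α + 1) * (α + 2) * N ^ (α - 1) * γ ^ 2 :=
    mul_le_mul_of_nonneg_left (pow_le_pow_left₀ hξ₁.le ha' 2) (by positivity)
  obtain ⟨herr₁, herr₂⟩ := abs_le.1 herr
  constructor
  · linarith only [hlow, hξ₁low, herr₁, hsmall]
  · linarith only [hup, hξ₁up, herr₂, hsmall]

/-- for `α > 2`, `θ > 0` sufficiently small and `γ = N^{-(α-1)/2-θ}`,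
the resonance function is comparable to `N^{α-1} γ²` on `D̃₁ × D̃₂`. -/
theorem statement3 (α : ℝ) (hα : 2 < α) :
    ∃ θ₀ : ℝ, 0 < θ₀ ∧
      ∀ θ : ℝ, 0 < θ → θ ≤ θ₀ →
        ∃ c C N₀ : ℝ, 0 < c ∧ 0 < C ∧ 1 ≤ N₀ ∧
          ∀ N : ℝ, N₀ ≤ N →
            ∀ ξ₁ η₁ ξ₂ η₂ : ℝ,
              (ξ₁, η₁) ∈ Dtilde1 α (N ^ (-(α - 1) / 2 - θ)) →
              (ξ₂, η₂) ∈ Dtilde2 α N (N ^ (-(α - 1) / 2 - θ)) →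
              c * N ^ (α - 1) * (N ^ (-(α - 1) / 2 - θ)) ^ 2 ≤ |Omega α ξ₁ ξ₂ η₁ η₂| ∧
              |Omega α ξ₁ ξ₂ η₁ η₂| ≤ C * N ^ (α - 1) * (N ^ (-(α - 1) / 2 - θ)) ^ 2 := by
  have hlarge : ∀ {p : ℝ} (K : ℝ), 0 < p → ∀ᶠ N : ℝ in atTop, K ≤ (α + 1) * N ^ p :=
    fun K hp => ((tendsto_rpow_atTop hp).const_mul_atTop (by linarith)).eventually_ge_atTop K
  obtain ⟨N₀, hN₀⟩ := eventually_atTop.1 <| (eventually_ge_atTop 2).and <|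
    (hlarge (4 * (2 * √(1 + α) + 1)) (by linarith : 0 < α / 2)).and
      (hlarge (64 * (1 + 4 * √(1 + α) * (√(1 + α) + 1))) (by linarith : 0 < (α - 2) / 2))
  -- The estimates hold for every `0 < γ ≤ 1`, so any `θ₀` will do.
  refine ⟨1, one_pos, fun θ hθ _ => ⟨(α + 1) / 64,
    3 * 2 ^ (α + 1) * (α + 1) * (α + 2) + (α + 1) / 64, max N₀ 1, by positivity, by positivity,
    le_max_right _ _, ?_⟩⟩
  intro N hN ξ₁ η₁ ξ₂ η₂ h₁ h₂
  obtain ⟨hN2, hN₁, hN₂⟩ := hN₀ N (le_of_max_le_left hN)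
  have hγ : 0 < N ^ (-(α - 1) / 2 - θ) := rpow_pos_of_pos (by linarith) _
  have hγ1 : N ^ (-(α - 1) / 2 - θ) ≤ 1 :=
    rpow_le_one_of_one_le_of_nonpos (by linarith) (by linarith)
  obtain ⟨hlow, hup⟩ := Omega_bounds_of_mem (by linarith) hN2 hN₁ hN₂ hγ hγ1 h₁ h₂
  rw [abs_of_nonneg ((by positivity : (0 : ℝ) ≤ (α + 1) / 64 * N ^ (α - 1) * _).trans hlow)]
  exact ⟨hlow, hup⟩
end

section
/- Let α > 0 and c₀, C₀ > 0. There exist constants c, C > 0 depending only on α, c₀, C₀ such that the following holds. Let N₁, N₂ > 0 with N₂ ≤ N₁, and let ξ₁, ξ₂, η₁, η₂ ∈ ℝ with ξ₁, ξ₂, ξ₁+ξ₂ nonzero, N₁/8 ≤ |ξ₁| ≤ 8N₁, N₁/8 ≤ |ξ₁+ξ₂| ≤ 8N₁, and N₂/8 ≤ |ξ₂| ≤ 8N₂. Assume c₀ N₁^α N₂ ≤ | |ξ₁+ξ₂|^α(ξ₁+ξ₂) - |ξ₁|^α ξ₁ - |ξ₂|^α ξ₂ | ≤ C₀ N₁^α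 N₂ and that |Ω_α(ξ₁,ξ₂,η₁,η₂)| ≤ (c₀/2) N₁^α N₂ (resonant case). Then c N₁^{α/2+1} N₂ ≤ |η₁ ξ₂ - η₂ ξ₁| ≤ C N₁^{α/2+1} N₂. -/
lemma Omega1_sub_Omega (α ξ₁ ξ₂ η₁ η₂ : ℝ) :
    Omega1 α ξ₁ ξ₂ - Omega α ξ₁ ξ₂ η₁ η₂ =
      (η₁ * ξ₂ - η₂ * ξ₁) ^ 2 / (ξ₁ * ξ₂ * (ξ₁ + ξ₂)) := by
  unfold Omega
  ring

lemma abs_sub_bounds_of_abs_le_half {a b m c C : ℝ} (ha : c * m ≤ |a|) (ha' : |a| ≤ C * m)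
    (hb : |b| ≤ c / 2 * m) : c / 2 * m ≤ |a - b| ∧ |a - b| ≤ (C + c / 2) * m := by
  constructor
  · linarith [abs_sub_abs_le_abs_sub a b]
  · linarith [abs_sub a b]

lemma abs_mul_mul_bounds {x y z N M : ℝ} (hN : 0 ≤ N) (hM : 0 ≤ M)
    (hx : N / 8 ≤ |x|) (hx' : |x| ≤ 8 * N) (hy : M / 8 ≤ |y|) (hy' : |y| ≤ 8 * M)
    (hz : N / 8 ≤ |z|) (hz' : |z| ≤ 8 * N) :
    N ^ 2 * M / 512 ≤ |x * y * z| ∧ |x * y * z| ≤ 512 * (N ^ 2 * M) := by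
  rw [abs_mul, abs_mul]
  constructor
  · have := mul_le_mul (mul_le_mul hx hy (by positivity) (abs_nonneg _)) hz
      (by positivity) (by positivity)
    linarith
  · have := mul_le_mul (mul_le_mul hx' hy' (abs_nonneg _) (by positivity)) hz'
      (abs_nonneg _) (by positivity)
    linarith

lemma rpow_half_add_one_sq {N : ℝ} (hN : 0 < N) (α : ℝ) :
    (N ^ (α / 2 + 1)) ^ 2 = N ^ α * N ^ 2 := by
  rw [← Real.rpow_natCast, ← Real.rpow_mul hN.le, ← Real.rpow_natCast, ← Real.rpow_add hN]
  norm_num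
  ring_nf

lemma sqrt_mul_le_abs_of_mul_sq_le_sq {x a L : ℝ} (hL : 0 ≤ L) (h : a * L ^ 2 ≤ x ^ 2) :
    √a * L ≤ |x| :=
  calc √a * L = √(a * L ^ 2) := by rw [Real.sqrt_mul' _ (sq_nonneg L), Real.sqrt_sq hL]
    _ ≤ √(x ^ 2) := Real.sqrt_le_sqrt h
    _ = |x| := Real.sqrt_sq_eq_abs x

lemma abs_le_sqrt_mul_of_sq_le_mul_sq {x b L : ℝ} (hL : 0 ≤ L) (h : x ^ 2 ≤ b * L ^ 2) :
    |x| ≤ √b * L :=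
  calc |x| = √(x ^ 2) := (Real.sqrt_sq_eq_abs x).symm
    _ ≤ √(b * L ^ 2) := Real.sqrt_le_sqrt h
    _ = √b * L := by rw [Real.sqrt_mul' _ (sq_nonneg L), Real.sqrt_sq hL]

theorem statement4_general (α c₀ C₀ : ℝ) (hc₀ : 0 < c₀) (hC₀ : 0 < C₀) :
    ∃ c C : ℝ, 0 < c ∧ 0 < C ∧
      ∀ N₁ N₂ ξ₁ ξ₂ η₁ η₂ : ℝ, 0 < N₂ → N₂ ≤ N₁ →
        ξ₁ ≠ 0 → ξ₂ ≠ 0 → ξ₁ + ξ₂ ≠ 0 →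
        N₁ / 8 ≤ |ξ₁| → |ξ₁| ≤ 8 * N₁ →
        N₁ / 8 ≤ |ξ₁ + ξ₂| → |ξ₁ + ξ₂| ≤ 8 * N₁ →
        N₂ / 8 ≤ |ξ₂| → |ξ₂| ≤ 8 * N₂ →
        c₀ * N₁ ^ α * N₂ ≤ |Omega1 α ξ₁ ξ₂| →
        |Omega1 α ξ₁ ξ₂| ≤ C₀ * N₁ ^ α * N₂ →
        |Omega α ξ₁ ξ₂ η₁ η₂| ≤ c₀ / 2 * (N₁ ^ α * N₂) →
        c * N₁ ^ (α / 2 + 1) * N₂ ≤ |η₁ * ξ₂ - η₂ * ξ₁| ∧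
          |η₁ * ξ₂ - η₂ * ξ₁| ≤ C * N₁ ^ (α / 2 + 1) * N₂ := by
  refine ⟨√(c₀ / 1024), √(512 * (C₀ + c₀ / 2)), by positivity, by positivity, ?_⟩
  intro N₁ N₂ ξ₁ ξ₂ η₁ η₂ hN₂ hN₁₂ _ _ _ hξ₁l hξ₁u hsuml hsumu hξ₂l hξ₂u hΩ1l hΩ1u hΩ
  have hN₁ : 0 < N₁ := hN₂.trans_le hN₁₂
  obtain ⟨hTl, hTu⟩ := abs_sub_bounds_of_abs_le_half
    (by rwa [← mul_assoc]) (by rwa [← mul_assoc]) hΩ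
  rw [Omega1_sub_Omega, abs_div, abs_of_nonneg (sq_nonneg _)] at hTl hTu
  obtain ⟨hDl, hDu⟩ := abs_mul_mul_bounds hN₁.le hN₂.le hξ₁l hξ₁u hξ₂l hξ₂u hsuml hsumu
  have hD : 0 < |ξ₁ * ξ₂ * (ξ₁ + ξ₂)| := (div_pos (by positivity) (by norm_num)).trans_le hDl
  rw [le_div_iff₀ hD] at hTl
  rw [div_le_iff₀ hD] at hTu
  have hL : (N₁ ^ (α / 2 + 1) * N₂) ^ 2 = N₁ ^ α * N₂ * (N₁ ^ 2 * N₂) := by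
    rw [mul_pow, rpow_half_add_one_sq hN₁]
    ring
  rw [mul_assoc, mul_assoc]
  constructor
  · refine sqrt_mul_le_abs_of_mul_sq_le_sq (by positivity) ?_
    rw [hL]
    linarith [mul_le_mul_of_nonneg_left hDl (by positivity : 0 ≤ c₀ / 2 * (N₁ ^ α * N₂))]
  · refine abs_le_sqrt_mul_of_sq_le_mul_sq (by positivity) ?_
    rw [hL]
    linarith [mul_le_mul_of_nonneg_left hDu (by positivity : 0 ≤ (C₀ + c₀ / 2) * (N₁ ^ α * N₂))]

/-- in the resonant case, the cross term `|η₁ξ₂ - η₂ξ₁|` is comparable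
to `N₁^{α/2+1} N₂`. -/
theorem statement4 (α c₀ C₀ : ℝ) (hα : 0 < α) (hc₀ : 0 < c₀) (hC₀ : 0 < C₀) :
    ∃ c C : ℝ, 0 < c ∧ 0 < C ∧
      ∀ N₁ N₂ ξ₁ ξ₂ η₁ η₂ : ℝ, 0 < N₂ → N₂ ≤ N₁ →
        ξ₁ ≠ 0 → ξ₂ ≠ 0 → ξ₁ + ξ₂ ≠ 0 →
        N₁ / 8 ≤ |ξ₁| → |ξ₁| ≤ 8 * N₁ →
        N₁ / 8 ≤ |ξ₁ + ξ₂| → |ξ₁ + ξ₂| ≤ 8 * N₁ →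
        N₂ / 8 ≤ |ξ₂| → |ξ₂| ≤ 8 * N₂ →
        c₀ * N₁ ^ α * N₂ ≤ |Omega1 α ξ₁ ξ₂| →
        |Omega1 α ξ₁ ξ₂| ≤ C₀ * N₁ ^ α * N₂ →
        |Omega α ξ₁ ξ₂ η₁ η₂| ≤ c₀ / 2 * (N₁ ^ α * N₂) →
        c * N₁ ^ (α / 2 + 1) * N₂ ≤ |η₁ * ξ₂ - η₂ * ξ₁| ∧
          |η₁ * ξ₂ - η₂ * ξ₁| ≤ C * N₁ ^ (α / 2 + 1) * N₂ :=
  statement4_general α c₀ C₀ hc₀ hC₀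
end

section
/- Let α > 0 and c > 0. There exists c' > 0 depending only on c such that the following holds. Let N₁ ≥ N₂ > 0 and ξ₁, ξ₂, η₁, η₂ ∈ ℝ with ξ₁, ξ₂ nonzero, N₁/8 ≤ |ξ₁| ≤ 8N₁, N₂/8 ≤ |ξ₂| ≤ 8N₂, and |η₁ ξ₂ - η₂ ξ₁| ≥ c N₁^{α/2+1} N₂. Then |∇ω_α(ξ₁,η₁) - ∇ω_α(ξ₂,η₂)| ≥ |η₁/ξ₁ - η₂/ξ₂| ≥ c' N₁^{α/2}, where ∇ω_α(ξ,η) = ((α+1)|ξ|^α - η²/ξ², 2η/ξ). -/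
/-! The difference of slopes `η₁/ξ₁ - η₂/ξ₂` equals the cross term `η₁ξ₂ - η₂ξ₁` divided by
`ξ₁ξ₂`, and `|ξ₁ξ₂| ≤ 64 N₁N₂`; this gives the lower bound with `c' = c/64`. The upper bound
holds because twice that difference is the second component of `∇ω_α(ξ₁,η₁) - ∇ω_α(ξ₂,η₂)`. -/

lemma abs_le_sqrt_sq_add_sq (a b : ℝ) : |b| ≤ √(a ^ 2 + b ^ 2) :=
  Real.abs_le_sqrt (le_add_of_nonneg_left (sq_nonneg a))

lemma le_abs_div_sub_div_of_abs_le {K M₁ M₂ ξ₁ ξ₂ η₁ η₂ : ℝ} (hK : 0 ≤ K)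
    (hξ₁ : ξ₁ ≠ 0) (hξ₂ : ξ₂ ≠ 0) (hM₁ : |ξ₁| ≤ M₁) (hM₂ : |ξ₂| ≤ M₂)
    (hcross : K * (M₁ * M₂) ≤ |η₁ * ξ₂ - η₂ * ξ₁|) :
    K ≤ |η₁ / ξ₁ - η₂ / ξ₂| := by
  rw [div_sub_div _ _ hξ₁ hξ₂, abs_div, abs_mul, le_div_iff₀ (by positivity), mul_comm ξ₁ η₂]
  calc K * (|ξ₁| * |ξ₂|) ≤ K * (M₁ * M₂) := by gcongr; exact (abs_nonneg ξ₁).trans hM₁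
    _ ≤ _ := hcross

/-- transversality of group velocities in the resonant case. The gradient of the
dispersion relation is `∇ω_α(ξ,η) = ((α+1)|ξ|^α - η²/ξ², 2η/ξ)` and its difference (in the
Euclidean norm) dominates `|η₁/ξ₁ - η₂/ξ₂| ≥ c' N₁^{α/2}`, with `c'` depending only on `c`. -/
theorem statement5 (c : ℝ) (hc : 0 < c) :
    ∃ c' : ℝ, 0 < c' ∧
      ∀ α : ℝ, 0 < α →
        ∀ N₁ N₂ ξ₁ ξ₂ η₁ η₂ : ℝ, 0 < N₂ → N₂ ≤ N₁ →
          ξ₁ ≠ 0 → ξ₂ ≠ 0 →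
          N₁ / 8 ≤ |ξ₁| → |ξ₁| ≤ 8 * N₁ →
          N₂ / 8 ≤ |ξ₂| → |ξ₂| ≤ 8 * N₂ →
          c * N₁ ^ (α / 2 + 1) * N₂ ≤ |η₁ * ξ₂ - η₂ * ξ₁| →
          c' * N₁ ^ (α / 2) ≤ |η₁ / ξ₁ - η₂ / ξ₂| ∧
            |η₁ / ξ₁ - η₂ / ξ₂| ≤
              Real.sqrt
                ((((α + 1) * |ξ₁| ^ α - η₁ ^ 2 / ξ₁ ^ 2) -
                    ((α + 1) * |ξ₂| ^ α - η₂ ^ 2 / ξ₂ ^ 2)) ^ 2 +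
                  (2 * η₁ / ξ₁ - 2 * η₂ / ξ₂) ^ 2) := by
  refine ⟨c / 64, by positivity, ?_⟩
  intro α _ N₁ N₂ ξ₁ ξ₂ η₁ η₂ hN₂ hN hξ₁ hξ₂ _ hM₁ _ hM₂ hcross
  have hN₁ : 0 < N₁ := hN₂.trans_le hN
  constructor
  · refine le_abs_div_sub_div_of_abs_le (by positivity) hξ₁ hξ₂ hM₁ hM₂ ?_
    calc c / 64 * N₁ ^ (α / 2) * (8 * N₁ * (8 * N₂)) = c * N₁ ^ (α / 2 + 1) * N₂ := by
          rw [Real.rpow_add hN₁, Real.rpow_one]; ring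
      _ ≤ _ := hcross
  · have htwice : 2 * η₁ / ξ₁ - 2 * η₂ / ξ₂ = 2 * (η₁ / ξ₁ - η₂ / ξ₂) := by ring
    calc |η₁ / ξ₁ - η₂ / ξ₂| ≤ |2 * η₁ / ξ₁ - 2 * η₂ / ξ₂| := by
          rw [htwice, abs_mul, abs_two]; linarith [abs_nonneg (η₁ / ξ₁ - η₂ / ξ₂)]
      _ ≤ _ := abs_le_sqrt_sq_add_sq _ _
end

section
/- Let α > 0, c > 0, L̄ > 0, and N₁, N₂ ∈ 2^ℤ. There exists a constant C > 0 (absolute) such that for every fixed (τ,ξ,η) ∈ ℝ³, the set E = {(ξ₁,η₁) ∈ Ã_{N₁} : (ξ-ξ₁, η-η₁) ∈ Ã_{N₂}, |τ - ω_α(ξ₁,η₁) - ω_α(ξ-ξ₁, η-η₁)| ≤ L̄, and |η₁/ξ₁ - (η-η₁)/(ξ-ξ₁)| ≥ c (max(N₁,N₂))^{α/2}} has two-dimensional Lebesgue measure at most C c^{-1} min(N₁,N₂) L̄ (max(N₁,N₂))^{-α/2}. -/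
open MeasureTheory

/-- Dispersion relation `ω_α(ξ,η) = |ξ|^α ξ + η²/ξ`. -/
noncomputable def omegaDisp (α ξ η : ℝ) : ℝ := |ξ| ^ α * ξ + η ^ 2 / ξ

lemma measure_le_of_pair (S : Set ℝ) (d : ℝ)
    (h : ∀ s ∈ S, ∀ t ∈ S, t - s ≤ d) :
    volume S ≤ ENNReal.ofReal (2 * d) := by
  rcases Set.eq_empty_or_nonempty S with h0 | ⟨x, hx⟩
  · simp [h0]
  · calc volume S ≤ volume (Set.Icc (x - d) (x + d)) := by
          refine measure_mono fun t ht => Set.mem_Icc.mpr ⟨?_, ?_⟩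
          · linarith [h t ht x hx]
          · linarith [h x hx t ht]
    _ ≤ ENNReal.ofReal (2 * d) := by
          rw [Real.volume_Icc]
          exact ENNReal.ofReal_le_ofReal (by ring_nf; exact le_rfl)

lemma halfline_bound (f g : ℝ → ℝ) (A L K : ℝ) (hK : 0 < K)
    (hid : ∀ s t, f t - f s = (t - s) * (g t + g s)) :
    volume {t : ℝ | |A - f t| ≤ L ∧ K ≤ g t} ≤ ENNReal.ofReal (2 * (L / K)) := by
  apply measure_le_of_pair
  rintro s ⟨hs1, hs2⟩ t ⟨ht1, ht2⟩
  have h1 := abs_le.mp hs1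
  have h2 := abs_le.mp ht1
  have hid' := hid s t
  rw [le_div_iff₀ hK]
  rcases le_or_gt (t - s) 0 with hts | hts
  · nlinarith
  · nlinarith [mul_le_mul_of_nonneg_left (show 2 * K ≤ g t + g s by nlinarith) hts.le]

lemma slice_bound (ξ₁ ξ₂ η A L K : ℝ) (h₁ : ξ₁ ≠ 0) (h₂ : ξ₂ ≠ 0) (hK : 0 < K) (hL : 0 ≤ L) :
    volume {t : ℝ | |A - (t ^ 2 / ξ₁ + (η - t) ^ 2 / ξ₂)| ≤ L ∧ K ≤ |t / ξ₁ - (η - t) / ξ₂|} ≤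
      ENNReal.ofReal (4 * (L / K)) := by
  set f : ℝ → ℝ := fun t => t ^ 2 / ξ₁ + (η - t) ^ 2 / ξ₂ with hf
  set g : ℝ → ℝ := fun t => t / ξ₁ - (η - t) / ξ₂ with hg
  have hid : ∀ s t, f t - f s = (t - s) * (g t + g s) := by
    intro s t; simp only [hf, hg]; field_simp; ring
  have hid' : ∀ s t, (-f) t - (-f) s = (t - s) * ((-g) t + (-g) s) := by
    intro s t; simp only [Pi.neg_apply]; linear_combination -hid s t
  have hsub : {t : ℝ | |A - f t| ≤ L ∧ K ≤ |g t|} ⊆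
      {t : ℝ | |A - f t| ≤ L ∧ K ≤ g t} ∪ {t : ℝ | |(-A) - (-f) t| ≤ L ∧ K ≤ (-g) t} := by
    rintro t ⟨h1, h2⟩
    rcases le_abs.mp h2 with h | h
    · exact Or.inl ⟨h1, h⟩
    · refine Or.inr ⟨?_, h⟩
      rw [show (-A) - (-f) t = -(A - f t) by simp only [Pi.neg_apply]; ring, abs_neg]; exact h1
  calc volume {t : ℝ | |A - f t| ≤ L ∧ K ≤ |g t|}
      ≤ volume ({t : ℝ | |A - f t| ≤ L ∧ K ≤ g t} ∪ {t : ℝ | |(-A) - (-f) t| ≤ L ∧ K ≤ (-g) t}) :=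
        measure_mono hsub
    _ ≤ volume {t : ℝ | |A - f t| ≤ L ∧ K ≤ g t} +
        volume {t : ℝ | |(-A) - (-f) t| ≤ L ∧ K ≤ (-g) t} := measure_union_le _ _
    _ ≤ ENNReal.ofReal (2 * (L / K)) + ENNReal.ofReal (2 * (L / K)) :=
        add_le_add (halfline_bound f g A L K hK hid) (halfline_bound (-f) (-g) (-A) L K hK hid')
    _ = ENNReal.ofReal (4 * (L / K)) := by
        rw [← ENNReal.ofReal_add (by positivity) (by positivity)]
        ring_nf

/-- measure bound for the transversal level set occurring in the proof of the
bilinear Strichartz estimate, with an absolute constant `C`. -/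
theorem statement10 :
    ∃ C : ℝ, 0 < C ∧
      ∀ α c Lbar : ℝ, 0 < α → 0 < c → 0 < Lbar →
        ∀ N₁ N₂ : ℝ, (∃ k : ℤ, N₁ = 2 ^ k) → (∃ k : ℤ, N₂ = 2 ^ k) →
          ∀ τ ξ η : ℝ,
            volume {q : ℝ × ℝ |
                (N₁ / 8 ≤ |q.1| ∧ |q.1| ≤ 8 * N₁) ∧
                (N₂ / 8 ≤ |ξ - q.1| ∧ |ξ - q.1| ≤ 8 * N₂) ∧
                |τ - omegaDisp α q.1 q.2 - omegaDisp α (ξ - q.1) (η - q.2)| ≤ Lbar ∧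
                c * (max N₁ N₂) ^ (α / 2) ≤ |q.2 / q.1 - (η - q.2) / (ξ - q.1)|} ≤
              ENNReal.ofReal (C * c⁻¹ * min N₁ N₂ * Lbar * (max N₁ N₂) ^ (-α / 2)) := by
  refine ⟨64, by norm_num, ?_⟩
  rintro α c L hα hc hL N₁ N₂ ⟨k₁, hk₁⟩ ⟨k₂, hk₂⟩ τ ξ η
  have hN₁ : 0 < N₁ := by rw [hk₁]; positivity
  have hN₂ : 0 < N₂ := by rw [hk₂]; positivity
  have hM : 0 < max N₁ N₂ := lt_of_lt_of_le hN₁ (le_max_left _ _)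
  set K := c * (max N₁ N₂) ^ (α / 2) with hKdef
  have hK : 0 < K := mul_pos hc (Real.rpow_pos_of_pos hM _)
  set E : Set (ℝ × ℝ) := {q : ℝ × ℝ |
      (N₁ / 8 ≤ |q.1| ∧ |q.1| ≤ 8 * N₁) ∧
      (N₂ / 8 ≤ |ξ - q.1| ∧ |ξ - q.1| ≤ 8 * N₂) ∧
      |τ - omegaDisp α q.1 q.2 - omegaDisp α (ξ - q.1) (η - q.2)| ≤ L ∧
      K ≤ |q.2 / q.1 - (η - q.2) / (ξ - q.1)|} with hE
  have hEmeas : MeasurableSet E := by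
    rw [hE]
    simp only [omegaDisp, Set.setOf_and]
    have m1 : Measurable fun q : ℝ × ℝ => |q.1| := measurable_fst.abs
    have m2 : Measurable fun q : ℝ × ℝ => |ξ - q.1| := (measurable_const.sub measurable_fst).abs
    have m3 : Measurable fun q : ℝ × ℝ =>
        |τ - (|q.1| ^ α * q.1 + q.2 ^ 2 / q.1) -
          (|ξ - q.1| ^ α * (ξ - q.1) + (η - q.2) ^ 2 / (ξ - q.1))| := by
      apply Measurable.abs
      apply Measurable.sub
      · apply Measurable.sub measurable_const
        exact ((m1.pow_const α).mul measurable_fst).add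
          (((measurable_snd.pow_const 2)).div measurable_fst)
      · exact ((m2.pow_const α).mul (measurable_const.sub measurable_fst)).add
          (((measurable_const.sub measurable_snd).pow_const 2).div
            (measurable_const.sub measurable_fst))
    have m4 : Measurable fun q : ℝ × ℝ => |q.2 / q.1 - (η - q.2) / (ξ - q.1)| :=
      ((measurable_snd.div measurable_fst).sub
        ((measurable_const.sub measurable_snd).div (measurable_const.sub measurable_fst))).abs
    exact (((measurableSet_le measurable_const m1).inter
        (measurableSet_le m1 measurable_const)).inter
      (((measurableSet_le measurable_const m2).inter (measurableSet_le m2 measurable_const)).inter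
        ((measurableSet_le m3 measurable_const).inter (measurableSet_le measurable_const m4))))
  set B : Set ℝ := {x : ℝ | (N₁ / 8 ≤ |x| ∧ |x| ≤ 8 * N₁) ∧
      (N₂ / 8 ≤ |ξ - x| ∧ |ξ - x| ≤ 8 * N₂)} with hB
  have hBmeas : MeasurableSet B := by
    rw [hB]; simp only [Set.setOf_and]
    have m1 : Measurable fun x : ℝ => |x| := measurable_id.abs
    have m2 : Measurable fun x : ℝ => |ξ - x| := (measurable_const.sub measurable_id).abs
    exact ((measurableSet_le measurable_const m1).inter
        (measurableSet_le m1 measurable_const)).inter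
      ((measurableSet_le measurable_const m2).inter (measurableSet_le m2 measurable_const))
  have hslice : ∀ x : ℝ, volume (Prod.mk x ⁻¹' E) ≤
      B.indicator (fun _ => ENNReal.ofReal (4 * (L / K))) x := by
    intro x
    by_cases hx : x ∈ B
    · rw [Set.indicator_of_mem hx]
      obtain ⟨⟨hx1, _⟩, ⟨hx2, _⟩⟩ := hx
      have hx0 : x ≠ 0 := by
        intro h; rw [h, abs_zero] at hx1; linarith
      have hξx0 : ξ - x ≠ 0 := by
        intro h; rw [h, abs_zero] at hx2; linarith
      refine le_trans (measure_mono ?_)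
        (slice_bound x (ξ - x) η (τ - |x| ^ α * x - |ξ - x| ^ α * (ξ - x)) L K hx0 hξx0 hK hL.le)
      rintro y hy
      obtain ⟨-, -, h3, h4⟩ := hy
      refine ⟨?_, h4⟩
      have : τ - omegaDisp α x y - omegaDisp α (ξ - x) (η - y) =
          (τ - |x| ^ α * x - |ξ - x| ^ α * (ξ - x)) - (y ^ 2 / x + (η - y) ^ 2 / (ξ - x)) := by
        simp only [omegaDisp]; ring
      rwa [this] at h3
    · rw [Set.indicator_of_notMem hx]
      have hempty : Prod.mk x ⁻¹' E = ∅ := by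
        rw [Set.eq_empty_iff_forall_notMem]
        rintro y ⟨h1, h2, -, -⟩
        exact hx ⟨h1, h2⟩
      rw [hempty, measure_empty]
  have hBvol : volume B ≤ ENNReal.ofReal (16 * min N₁ N₂) := by
    rcases min_cases N₁ N₂ with ⟨hmin, _⟩ | ⟨hmin, _⟩
    · rw [hmin]
      have hsub : B ⊆ Set.Icc (-(8 * N₁)) (8 * N₁) := fun x hx => by
        have h := abs_le.mp hx.1.2
        exact Set.mem_Icc.mpr ⟨h.1, h.2⟩
      calc volume B ≤ volume (Set.Icc (-(8 * N₁)) (8 * N₁)) := measure_mono hsub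
        _ ≤ ENNReal.ofReal (16 * N₁) := by
            rw [Real.volume_Icc]; exact ENNReal.ofReal_le_ofReal (by linarith)
    · rw [hmin]
      have hsub : B ⊆ Set.Icc (ξ - 8 * N₂) (ξ + 8 * N₂) := fun x hx => by
        have h := abs_le.mp hx.2.2
        exact Set.mem_Icc.mpr ⟨by linarith [h.2], by linarith [h.1]⟩
      calc volume B ≤ volume (Set.Icc (ξ - 8 * N₂) (ξ + 8 * N₂)) := measure_mono hsub
        _ ≤ ENNReal.ofReal (16 * N₂) := by
            rw [Real.volume_Icc]; exact ENNReal.ofReal_le_ofReal (by linarith)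
  calc volume E = ∫⁻ x, volume (Prod.mk x ⁻¹' E) := by
        rw [Measure.volume_eq_prod, Measure.prod_apply hEmeas]
    _ ≤ ∫⁻ x, B.indicator (fun _ => ENNReal.ofReal (4 * (L / K))) x := lintegral_mono hslice
    _ = ENNReal.ofReal (4 * (L / K)) * volume B := lintegral_indicator_const hBmeas _
    _ ≤ ENNReal.ofReal (4 * (L / K)) * ENNReal.ofReal (16 * min N₁ N₂) :=
        mul_le_mul_right hBvol _
    _ ≤ ENNReal.ofReal (64 * c⁻¹ * min N₁ N₂ * L * (max N₁ N₂) ^ (-α / 2)) := by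
        rw [← ENNReal.ofReal_mul (by positivity)]
        apply ENNReal.ofReal_le_ofReal
        have hrw : (max N₁ N₂ : ℝ) ^ (-α / 2) = ((max N₁ N₂ : ℝ) ^ (α / 2))⁻¹ := by
          rw [neg_div, Real.rpow_neg hM.le]
        rw [hrw, hKdef]
        have hm : (0:ℝ) < (max N₁ N₂ : ℝ) ^ (α / 2) := Real.rpow_pos_of_pos hM _
        apply le_of_eq
        field_simp
        ring
end

section
/- Let α ∈ ℝ and let ξ₁, ξ₂, η₁, η₂ ∈ ℝ with ξ₁ ≠ 0, ξ₂ ≠ 0, and ξ₁ + ξ₂ ≠ 0. Then the 3×3 determinant det [[ (α+1)|ξ₁|^α - η₁²/ξ₁², (α+1)|ξ₂|^α - η₂²/ξ₂², (α+1)|ξ₁+ξ₂|^α - (η₁+η₂)²/(ξ₁+ξ₂)² ], [ 2η₁/ξ₁, 2η₂/ξ₂, 2(η₁+η₂)/(ξ₁+ξ₂) ], [ 1, 1, 1 ]] equals - (2(η₁ξ₂ - η₂ξ₁)/(ξ₁ ξ₂ (ξ₁+ξ₂))) · ( (α+1)(|ξ₁|^α ξ₁ + |ξ₂|^α ξ₂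 - |ξ₁+ξ₂|^α (ξ₁+ξ₂)) - (η₁ξ₂ - η₂ξ₁)²/(ξ₁ ξ₂ (ξ₁+ξ₂)) ). -/
theorem Matrix.det_fin_three_of_last_row_eq_one {R : Type*} [CommRing R] (a₀ a₁ a₂ b₀ b₁ b₂ : R) :
    !![a₀, a₁, a₂; b₀, b₁, b₂; 1, 1, 1].det =
      (a₁ - a₀) * (b₂ - b₀) - (a₂ - a₀) * (b₁ - b₀) := by
  rw [Matrix.det_fin_three]
  simp only [Matrix.of_apply, Matrix.cons_val, Matrix.cons_val_zero, Matrix.cons_val_one]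
  ring

/-- explicit evaluation of the determinant of the matrix formed from the
(unnormalized) normals to the characteristic surface of fractional KP-I at
`(ξ₁,η₁)`, `(ξ₂,η₂)`, `(ξ₁+ξ₂,η₁+η₂)`. -/
theorem statement17 (α ξ₁ ξ₂ η₁ η₂ : ℝ) (h₁ : ξ₁ ≠ 0) (h₂ : ξ₂ ≠ 0)
    (h₃ : ξ₁ + ξ₂ ≠ 0) :
    Matrix.det
        !![(α + 1) * |ξ₁| ^ α - η₁ ^ 2 / ξ₁ ^ 2,
             (α + 1) * |ξ₂| ^ α - η₂ ^ 2 / ξ₂ ^ 2,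
             (α + 1) * |ξ₁ + ξ₂| ^ α - (η₁ + η₂) ^ 2 / (ξ₁ + ξ₂) ^ 2;
           2 * η₁ / ξ₁, 2 * η₂ / ξ₂, 2 * (η₁ + η₂) / (ξ₁ + ξ₂);
           1, 1, 1] =
      -(2 * (η₁ * ξ₂ - η₂ * ξ₁) / (ξ₁ * ξ₂ * (ξ₁ + ξ₂))) *
        ((α + 1) * (|ξ₁| ^ α * ξ₁ + |ξ₂| ^ α * ξ₂ - |ξ₁ + ξ₂| ^ α * (ξ₁ + ξ₂)) -
          (η₁ * ξ₂ - η₂ * ξ₁) ^ 2 / (ξ₁ * ξ₂ * (ξ₁ + ξ₂))) := by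
  rw [Matrix.det_fin_three_of_last_row_eq_one]
  field_simp
  ring
end

section
/- Let α > 0 and let ξ₁, ξ₂ ∈ ℝ with ξ₁ ≠ 0, ξ₂ ≠ 0, and ξ₁ + ξ₂ ≠ 0. Then the dispersive part of the resonance function has the same sign as ξ₁ξ₂(ξ₁+ξ₂); that is, ( |ξ₁+ξ₂|^α(ξ₁+ξ₂) - |ξ₁|^α ξ₁ - |ξ₂|^α ξ₂ ) · ( ξ₁ ξ₂ (ξ₁+ξ₂) ) ≥ 0. Consequently, the two terms |ξ₁+ξ₂|^α(ξ₁+ξ₂) - |ξ₁|^α ξ₁ - |ξ₂|^α ξ₂ and (η₁ξ₂ - η₂ξ₁)²/(ξ₁ξ₂(ξ₁+ξ₂)) have the same sign for any η₁, η₂ ∈ ℝ, so they can cancel in the resonance function Ω_α. -/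
/-!
The map `f x = |x| ^ α * x` is odd and, for `α ≥ 0`, superadditive on `[0, ∞)`. For any such
map the defect `f (a + b) - f a - f b` has the sign of `a b (a + b)`: when `a, b ≥ 0` this is
superadditivity; when `b ≤ 0 ≤ a + b` it is superadditivity applied to `a = (a + b) + (-b)`;
the remaining sign patterns follow by swapping `a, b` and by oddness. The transverse part
`w ^ 2 / P` has the sign of `P`, hence that of the defect as well.
-/

section OddSuperadditive

variable {R : Type*} [CommRing R] [LinearOrder R] [IsStrictOrderedRing R] {f : R → R}

lemma sub_sub_mul_nonneg_of_nonneg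
    (hsup : ∀ x y, 0 ≤ x → 0 ≤ y → f x + f y ≤ f (x + y)) {a b : R} (ha : 0 ≤ a) (hb : 0 ≤ b) :
    0 ≤ (f (a + b) - f a - f b) * (a * b * (a + b)) := by
  have hdefect : 0 ≤ f (a + b) - f a - f b := by linarith [hsup a b ha hb]
  exact mul_nonneg hdefect (by positivity)

lemma sub_sub_mul_nonneg_of_nonpos_of_add_nonneg
    (hodd : f.Odd) (hsup : ∀ x y, 0 ≤ x → 0 ≤ y → f x + f y ≤ f (x + y))
    {a b : R} (hb : b ≤ 0) (hab : 0 ≤ a + b) :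
    0 ≤ (f (a + b) - f a - f b) * (a * b * (a + b)) := by
  have hsplit := hsup (a + b) (-b) hab (neg_nonneg.mpr hb)
  rw [hodd, add_neg_cancel_right] at hsplit
  have hdefect : f (a + b) - f a - f b ≤ 0 := by linarith
  have ha : 0 ≤ a := by linarith
  exact mul_nonneg_of_nonpos_of_nonpos hdefect
    (mul_nonpos_of_nonpos_of_nonneg (mul_nonpos_of_nonneg_of_nonpos ha hb) hab)

theorem Function.Odd.sub_sub_mul_nonneg
    (hodd : f.Odd) (hsup : ∀ x y, 0 ≤ x → 0 ≤ y → f x + f y ≤ f (x + y)) (a b : R) :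
    0 ≤ (f (a + b) - f a - f b) * (a * b * (a + b)) := by
  suffices key : ∀ a b : R, 0 ≤ a + b → 0 ≤ (f (a + b) - f a - f b) * (a * b * (a + b)) by
    rcases le_total 0 (a + b) with hab | hab
    · exact key a b hab
    · have hneg := key (-a) (-b) (by linarith)
      rw [← neg_add, hodd, hodd, hodd] at hneg
      linarith
  intro a b hab
  rcases le_total 0 b with hb | hb
  · rcases le_total 0 a with ha | ha
    · exact sub_sub_mul_nonneg_of_nonneg hsup ha hb
    · have hswap := sub_sub_mul_nonneg_of_nonpos_of_add_nonneg hodd hsup ha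
        (by rwa [add_comm])
      rw [add_comm b a] at hswap
      linarith
  · exact sub_sub_mul_nonneg_of_nonpos_of_add_nonneg hodd hsup hb hab

end OddSuperadditive

lemma Real.odd_abs_rpow_mul_self (α : ℝ) : Function.Odd fun x : ℝ ↦ |x| ^ α * x := by
  intro x
  simp only [abs_neg, mul_neg]

lemma Real.abs_rpow_mul_self_add_le {α x y : ℝ} (hα : 0 ≤ α) (hx : 0 ≤ x) (hy : 0 ≤ y) :
    |x| ^ α * x + |y| ^ α * y ≤ |x + y| ^ α * (x + y) := by
  rw [abs_of_nonneg hx, abs_of_nonneg hy, abs_of_nonneg (add_nonneg hx hy), mul_add]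
  gcongr
  · exact le_add_of_nonneg_right hy
  · exact le_add_of_nonneg_left hx

lemma mul_sq_div_nonneg {K : Type*} [Field K] [LinearOrder K] [IsStrictOrderedRing K]
    {a b : K} (c : K) (h : 0 ≤ a * b) : 0 ≤ a * (c ^ 2 / b) := by
  have hrewrite : a * (c ^ 2 / b) = a * b * (c / b) ^ 2 := by
    rcases eq_or_ne b 0 with rfl | hb
    · simp
    · field_simp
  rw [hrewrite]
  exact mul_nonneg h (sq_nonneg _)

theorem statement19_general (α ξ₁ ξ₂ : ℝ) (hα : 0 < α) :
    0 ≤ (|ξ₁ + ξ₂| ^ α * (ξ₁ + ξ₂) - |ξ₁| ^ α * ξ₁ - |ξ₂| ^ α * ξ₂) *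
        (ξ₁ * ξ₂ * (ξ₁ + ξ₂)) ∧
      ∀ η₁ η₂ : ℝ,
        0 ≤ (|ξ₁ + ξ₂| ^ α * (ξ₁ + ξ₂) - |ξ₁| ^ α * ξ₁ - |ξ₂| ^ α * ξ₂) *
          ((η₁ * ξ₂ - η₂ * ξ₁) ^ 2 / (ξ₁ * ξ₂ * (ξ₁ + ξ₂))) := by
  have hsign := (Real.odd_abs_rpow_mul_self α).sub_sub_mul_nonneg
    (fun _ _ hx hy ↦ Real.abs_rpow_mul_self_add_le hα.le hx hy) ξ₁ ξ₂
  exact ⟨hsign, fun η₁ η₂ ↦ mul_sq_div_nonneg _ hsign⟩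

/-- the dispersive part `|ξ₁+ξ₂|^α(ξ₁+ξ₂) - |ξ₁|^α ξ₁ - |ξ₂|^α ξ₂` of the
resonance function has the same sign as `ξ₁ξ₂(ξ₁+ξ₂)`; consequently it has the same sign
as the transverse part `(η₁ξ₂ - η₂ξ₁)²/(ξ₁ξ₂(ξ₁+ξ₂))` for any `η₁, η₂`. -/
theorem statement19 (α ξ₁ ξ₂ : ℝ) (hα : 0 < α) (h₁ : ξ₁ ≠ 0) (h₂ : ξ₂ ≠ 0)
    (h₃ : ξ₁ + ξ₂ ≠ 0) :
    0 ≤ (|ξ₁ + ξ₂| ^ α * (ξ₁ + ξ₂) - |ξ₁| ^ α * ξ₁ - |ξ₂| ^ α * ξ₂) *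
        (ξ₁ * ξ₂ * (ξ₁ + ξ₂)) ∧
      ∀ η₁ η₂ : ℝ,
        0 ≤ (|ξ₁ + ξ₂| ^ α * (ξ₁ + ξ₂) - |ξ₁| ^ α * ξ₁ - |ξ₂| ^ α * ξ₂) *
          ((η₁ * ξ₂ - η₂ * ξ₁) ^ 2 / (ξ₁ * ξ₂ * (ξ₁ + ξ₂))) :=
  statement19_general α ξ₁ ξ₂ hα
end
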